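/- Let δ > 0, let U be a standard normal random variable, and set Y = U · exp((δ/2) U²). Then for every real p > 0: E[|Y|^p] < ∞ if p δ < 1, and E[|Y|^p] = ∞ if p δ ≥ 1. In particular, the Lambert W transformed Gaussian random variable Y has an unbounded p-th moment for all p ≥ 1/δ. -/

import Mathlib

/-!
Against the standard Gaussian density `e^{-x²/2}/√(2π)`, the moment `E|Y|^p` is the integral of
`|x|^p e^{-(1 - pδ) x²/2}/√(2π)`. For `pδ < 1` this is a Gaussian-type integral, finite since
`p > -1`; for `pδ ≥ 1` the integrand is at least a positive constant on `(1, ∞)`.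
-/

open MeasureTheory ProbabilityTheory Real
open scoped ENNReal

lemma integrable_abs_rpow_mul_exp_neg_mul_sq {b : ℝ} (hb : 0 < b) {p : ℝ} (hp : -1 < p) :
    Integrable fun x : ℝ => |x| ^ p * exp (-b * x ^ 2) := by
  rw [← integrableOn_univ, ← Set.Iio_union_Ici (a := (0 : ℝ)), integrableOn_union,
    integrableOn_Ici_iff_integrableOn_Ioi]
  have hIoi : IntegrableOn (fun x : ℝ => |x| ^ p * exp (-b * x ^ 2)) (Set.Ioi 0) :=
    (integrableOn_rpow_mul_exp_neg_mul_sq hb hp).congr_fun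
      (fun x (hx : 0 < x) => by rw [abs_of_pos hx]) measurableSet_Ioi
  refine ⟨?_, hIoi⟩
  rw [← (Measure.measurePreserving_neg (volume : Measure ℝ)).integrableOn_comp_preimage
      (Homeomorph.neg ℝ).measurableEmbedding]
  simpa [Function.comp_def] using hIoi

lemma lintegral_abs_rpow_mul_exp_neg_mul_sq_eq_top {b : ℝ} (hb : b ≤ 0) {p : ℝ} (hp : 0 ≤ p) :
    ∫⁻ x : ℝ, ENNReal.ofReal (|x| ^ p * exp (-b * x ^ 2)) = ∞ := by
  have hge : ∀ x ∈ Set.Ioi (1 : ℝ), 1 ≤ ENNReal.ofReal (|x| ^ p * exp (-b * x ^ 2)) := by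
    intro x (hx : 1 < x)
    have hpow : 1 ≤ |x| ^ p := one_le_rpow (by rw [abs_of_pos (by linarith)]; linarith) hp
    have hexp : 1 ≤ exp (-b * x ^ 2) := one_le_exp (by nlinarith [sq_nonneg x])
    exact ENNReal.one_le_ofReal.2 (one_le_mul_of_one_le_of_one_le hpow hexp)
  refine eq_top_iff.2 ?_
  calc ∞ = ∫⁻ _ in Set.Ioi (1 : ℝ), 1 := by simp
    _ ≤ ∫⁻ x in Set.Ioi (1 : ℝ), ENNReal.ofReal (|x| ^ p * exp (-b * x ^ 2)) :=
      setLIntegral_mono' measurableSet_Ioi hge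
    _ ≤ _ := setLIntegral_le_lintegral _ _

lemma gaussianPDFReal_mul_abs_mul_exp_rpow (δ p x : ℝ) :
    gaussianPDFReal 0 1 x * |x * exp (δ / 2 * x ^ 2)| ^ p
      = (√(2 * π))⁻¹ * (|x| ^ p * exp (-((1 - p * δ) / 2) * x ^ 2)) := by
  rw [gaussianPDFReal, abs_mul, abs_of_pos (exp_pos _), mul_rpow (abs_nonneg x) (exp_pos _).le,
    ← exp_mul]
  push_cast
  rw [mul_one, mul_one, sub_zero]
  have hexp : exp (-x ^ 2 / 2) * exp (δ / 2 * x ^ 2 * p) = exp (-((1 - p * δ) / 2) * x ^ 2) := by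
    rw [← exp_add]; ring_nf
  linear_combination (√(2 * π))⁻¹ * |x| ^ p * hexp

lemma lintegral_gaussianReal_abs_mul_exp_rpow (δ p : ℝ) :
    ∫⁻ x, ENNReal.ofReal (|x * exp (δ / 2 * x ^ 2)| ^ p) ∂(gaussianReal 0 1)
      = ENNReal.ofReal (√(2 * π))⁻¹ *
          ∫⁻ x, ENNReal.ofReal (|x| ^ p * exp (-((1 - p * δ) / 2) * x ^ 2)) := by
  rw [gaussianReal_of_var_ne_zero 0 one_ne_zero,
    lintegral_withDensity_eq_lintegral_mul _ (measurable_gaussianPDF 0 1) (by fun_prop),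
    ← lintegral_const_mul _ (by fun_prop)]
  refine lintegral_congr fun x => ?_
  rw [Pi.mul_apply, gaussianPDF, ← ENNReal.ofReal_mul (gaussianPDFReal_nonneg 0 1 x),
    gaussianPDFReal_mul_abs_mul_exp_rpow, ENNReal.ofReal_mul (by positivity)]

theorem lambertW_gaussian_moments_general (δ : ℝ) (p : ℝ) (hp : 0 < p) :
    (p * δ < 1 →
      ∫⁻ x, ENNReal.ofReal (|x * Real.exp (δ / 2 * x ^ 2)| ^ p) ∂(gaussianReal 0 1) < ⊤) ∧
    (1 ≤ p * δ →
      ∫⁻ x, ENNReal.ofReal (|x * Real.exp (δ / 2 * x ^ 2)| ^ p) ∂(gaussianReal 0 1) = ⊤) := by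
  rw [lintegral_gaussianReal_abs_mul_exp_rpow]
  constructor
  · intro hpδ
    have hb : 0 < (1 - p * δ) / 2 := by linarith
    exact ENNReal.mul_lt_top ENNReal.ofReal_lt_top
      (integrable_abs_rpow_mul_exp_neg_mul_sq hb (by linarith)).lintegral_lt_top
  · intro hpδ
    rw [lintegral_abs_rpow_mul_exp_neg_mul_sq_eq_top (b := (1 - p * δ) / 2) (by linarith) hp.le]
    exact ENNReal.mul_top (by positivity)

/-- **Heavy tails of the Lambert W transformed Gaussian.**
Let `δ > 0`, let `U` be standard normal and `Y = U ⬝ exp((δ/2) U²)`. Then for every real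
`p > 0`: `E[|Y|^p] < ∞` if `p δ < 1`, and `E[|Y|^p] = ∞` if `p δ ≥ 1`. -/
theorem lambertW_gaussian_moments (δ : ℝ) (hδ : 0 < δ) (p : ℝ) (hp : 0 < p) :
    (p * δ < 1 →
      ∫⁻ x, ENNReal.ofReal (|x * Real.exp (δ / 2 * x ^ 2)| ^ p) ∂(gaussianReal 0 1) < ⊤) ∧
    (1 ≤ p * δ →
      ∫⁻ x, ENNReal.ofReal (|x * Real.exp (δ / 2 * x ^ 2)| ^ p) ∂(gaussianReal 0 1) = ⊤) :=
  lambertW_gaussian_moments_general δ p hp
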